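/- arXiv:1407.3458 — 4 statements merged into one kernel-verified Lean document; each statement's English description precedes it below -/
import Mathlib

section
/- Let ε = ±1 and let r, λ, A, a₁, B be real numbers with A = 2a₁ (from the soliton condition), B = −r/2 − 1. If the Ricci tensor ρ = [[−2,0,0],[0, −εA + r/2 + 1, A],[0, A, −εA − r/2 − 1]] and the Lie derivative L = [[0,0,0],[0, 2εa₁, −2a₁],[0, −2a₁, 2εa₁]] satisfy L + ρ = λ·G where G = diag(1, 1, −1), then λ = −2, A = 2a₁, and r = −6. -/
/-- If the Ricci soliton equation `L_ξ g + ρ = λ g` holds in a φ-basis for a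
3-dimensional paracontact metric manifold whose Reeb vector field is an
infinitesimal harmonic transformation, then `λ = −2`, `A = 2a₁` and `r = −6`. -/
theorem stmt7 (ε a₁ A r lam : ℝ) (hε : ε ^ 2 = 1)
    (ρ L G : Matrix (Fin 3) (Fin 3) ℝ)
    (hρ : ρ = !![-2, 0, 0;
                 0, -ε * A + r / 2 + 1, A;
                 0, A, -ε * A - r / 2 - 1])
    (hL : L = !![0, 0, 0;
                 0, 2 * ε * a₁, -2 * a₁;
                 0, -2 * a₁, 2 * ε * a₁])
    (hG : G = !![1, 0, 0; 0, 1, 0; 0, 0, -1])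
    (hsolit : L + ρ = lam • G) :
    lam = -2 ∧ A = 2 * a₁ ∧ r = -6 := by
  subst hρ hL hG
  have h00 := congrFun (congrFun hsolit 0) 0
  have h11 := congrFun (congrFun hsolit 1) 1
  have h12 := congrFun (congrFun hsolit 1) 2
  simp [Matrix.add_apply, Matrix.smul_apply] at h00 h11 h12
  refine ⟨by linarith, by linarith, ?_⟩
  have hA : A = 2 * a₁ := by linarith
  subst hA
  nlinarith [h11]
end

section
/- Let ε = ±1 and let A, r be real numbers, with a₁ ≠ 0. Define the 3×3 matrices R₁ = [[−(εA+1), −A],[A, εA−1]] acting as: R(ξ,e)ξ = −(εA+1)e − A φe, R(ξ,φe)ξ = A e + (εA−1)φe, R(e,φe)ξ = 0. Then these satisfy the (κ,μ)-condition R(X,Y)ξ = κ(η(X)Y − η(Y)X) + μ(η(X)hY − η(Y)hX) on basis vectors, with κ = −1 and μ = −εA/a₁, where hξ=0, he = a₁(e + εφe), h(φe) = −εa₁(e + εφe). -/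
/-- A 3-dimensional paracontact metric manifold whose Reeb vector field is an
infinitesimal harmonic transformation is a `(κ,μ)`-space with `κ = −1` and
`μ = −εA/a₁`, where the curvature on the φ-basis `{ξ, e, φe}` is as given. -/
theorem stmt10 {V : Type*} [AddCommGroup V] [Module ℝ V]
    (ε A a₁ : ℝ) (hε : ε ^ 2 = 1) (ha₁ : a₁ ≠ 0)
    (ξ e f : V) (η : V →ₗ[ℝ] ℝ) (hηξ : η ξ = 1) (hηe : η e = 0) (hηf : η f = 0)
    (h : V →ₗ[ℝ] V) (hhξ : h ξ = 0)
    (hhe : h e = a₁ • e + (ε * a₁) • f)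
    (hhf : h f = (-(ε * a₁)) • e + (-a₁) • f)
    (R : V → V → V → V)
    (hR1 : R ξ e ξ = (-(ε * A + 1)) • e + (-A) • f)
    (hR2 : R ξ f ξ = A • e + (ε * A - 1) • f)
    (hR3 : R e f ξ = 0) :
    ∃ κ μ : ℝ, κ = -1 ∧ μ = -(ε * A) / a₁ ∧
      (∀ X Y : V, (X = ξ ∧ Y = e) ∨ (X = ξ ∧ Y = f) ∨ (X = e ∧ Y = f) →
        R X Y ξ = κ • (η X • Y - η Y • X) + μ • (η X • h Y - η Y • h X)) := by
  refine ⟨-1, -(ε * A) / a₁, rfl, rfl, ?_⟩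
  rintro X Y (⟨rfl, rfl⟩ | ⟨rfl, rfl⟩ | ⟨rfl, rfl⟩)
  · rw [hR1, hηξ, hηe, hhξ, hhe]
    match_scalars <;> field_simp <;> first | ring1 | linear_combination A * a₁ * hε | linear_combination -(A * a₁) * hε | linear_combination 2 * A * a₁ * hε | linear_combination -(2 * A * a₁) * hε | linear_combination A * hε
  · rw [hR2, hηξ, hηf, hhξ, hhf]
    match_scalars <;> field_simp <;> first | ring1 | linear_combination A * a₁ * hε | linear_combination -(A * a₁) * hε | linear_combination 2 * A * a₁ * hε | linear_combination -(2 * A * a₁) * hε | linear_combination -A * hε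
  · rw [hR3, hηe, hηf]
    module
end

section
/- Let g be the symmetric bilinear form on ℝ³ with matrix (1/4)·[[a, b, −y],[b, c, 0],[−y, 0, 1]] in coordinates (x,y,z), with a, b, c smooth functions, and let φ have matrix [[−b, −c, 0],[a−y², b, 0],[−by, −cy, 0]], ξ = 2∂_z, η = ½(dz − y dx). Then d η(·,·) = g(·, φ·) (as bilinear forms on each tangent space) if and only if ac − b² − cy² = −1. -/
/-- In Darboux coordinates, with `g` and `φ` given by the stated matrices, one has
`dη(·,·) = g(·, φ·)` (as bilinear forms, i.e. as matrices `dη = G·Φ`) if and only if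
`ac − b² − cy² = −1`. -/
theorem stmt11 (a b c y : ℝ)
    (dη G Φ : Matrix (Fin 3) (Fin 3) ℝ)
    (hdη : dη = (1 / 4 : ℝ) • !![0, 1, 0; -1, 0, 0; 0, 0, 0])
    (hG : G = (1 / 4 : ℝ) • !![a, b, -y; b, c, 0; -y, 0, 1])
    (hΦ : Φ = !![-b, -c, 0; a - y ^ 2, b, 0; -b * y, -c * y, 0]) :
    dη = G * Φ ↔ a * c - b ^ 2 - c * y ^ 2 = -1 := by
  subst hdη hG hΦ
  constructor
  · intro h
    have h01 := congrFun (congrFun h 0) 1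
    simp [Matrix.mul_apply, Fin.sum_univ_succ, Matrix.smul_apply] at h01
    nlinarith [h01]
  · intro h
    ext i j
    fin_cases i <;> fin_cases j <;>
      simp [Matrix.mul_apply, Fin.sum_univ_succ, Matrix.smul_apply, Matrix.vecHead, Matrix.vecTail] <;> nlinarith [h]
end

section
/- On ℝ³ with coordinates (x,y,z), let ξ = 2∂_z, E = (1/√2)(4∂_x + (2y² − 2F + 1)∂_y + 4y∂_z), φE = (1/√2)(−4∂_x + (1 − 2y² + 2F)∂_y − 4y∂_z), where F(x,y,z) = f(x) + α e^{2z} + βy + γ with f smooth and α ≠ 0, β, γ real constants. Then the Lie brackets are [ξ, E] = −4αe^{2z}(E + φE), [ξ, φE] = 4αe^{2z}(E + φE), and [E, φE] = −2ξ + √2(β − 2y)(E + φE). -/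
set_option maxHeartbeats 1000000

/-- The Lie brackets of the frame `{ξ, E, φE}` of the inhomogeneous paracontact
Ricci soliton example on ℝ³, where `F = f(x) + α e^{2z} + βy + γ`:
`[ξ,E] = −4αe^{2z}(E + φE)`, `[ξ,φE] = 4αe^{2z}(E + φE)`,
`[E,φE] = −2ξ + √2(β − 2y)(E + φE)`. -/
theorem stmt18 (f : ℝ → ℝ) (hf : ContDiff ℝ (⊤ : ℕ∞) f) (α β γ : ℝ) (hα : α ≠ 0)
    (F : (Fin 3 → ℝ) → ℝ)
    (hF : F = fun p => f (p 0) + α * Real.exp (2 * p 2) + β * p 1 + γ)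
    (lieB : ((Fin 3 → ℝ) → (Fin 3 → ℝ)) → ((Fin 3 → ℝ) → (Fin 3 → ℝ)) →
      ((Fin 3 → ℝ) → (Fin 3 → ℝ)))
    (hlie : ∀ X Y p, lieB X Y p = fderiv ℝ Y p (X p) - fderiv ℝ X p (Y p))
    (ξ E φE : (Fin 3 → ℝ) → (Fin 3 → ℝ))
    (hξ : ξ = fun _ => ![0, 0, 2])
    (hE : E = fun p => (Real.sqrt 2)⁻¹ • ![4, 2 * (p 1) ^ 2 - 2 * F p + 1, 4 * p 1])
    (hφE : φE = fun p => (Real.sqrt 2)⁻¹ • ![-4, 1 - 2 * (p 1) ^ 2 + 2 * F p, -4 * p 1]) :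
    (∀ p, lieB ξ E p = (-4 * α * Real.exp (2 * p 2)) • (E p + φE p)) ∧
    (∀ p, lieB ξ φE p = (4 * α * Real.exp (2 * p 2)) • (E p + φE p)) ∧
    (∀ p, lieB E φE p = (-2 : ℝ) • ξ p + (Real.sqrt 2 * (β - 2 * p 1)) • (E p + φE p)) := by
  subst hF hξ hE hφE
  set c : ℝ := (Real.sqrt 2)⁻¹ with hc
  have h2 : Real.sqrt 2 * Real.sqrt 2 = 2 := Real.mul_self_sqrt (by norm_num)
  have hs0 : Real.sqrt 2 ≠ 0 := by positivity
  set E : (Fin 3 → ℝ) → (Fin 3 → ℝ) :=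
    fun p => c • ![4, 2 * (p 1) ^ 2 -
      2 * (f (p 0) + α * Real.exp (2 * p 2) + β * p 1 + γ) + 1, 4 * p 1] with hEdef
  set φE : (Fin 3 → ℝ) → (Fin 3 → ℝ) :=
    fun p => c • ![-4, 1 - 2 * (p 1) ^ 2 +
      2 * (f (p 0) + α * Real.exp (2 * p 2) + β * p 1 + γ), -4 * p 1] with hφEdef
  set D : (Fin 3 → ℝ) → ((Fin 3 → ℝ) →L[ℝ] (Fin 3 → ℝ)) :=
    fun p => ContinuousLinearMap.pi ![0,
        (c * (-2 * deriv f (p 0))) • ContinuousLinearMap.proj 0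
          + (c * (4 * p 1 - 2 * β)) • ContinuousLinearMap.proj 1
          + (c * (-4 * α * Real.exp (2 * p 2))) • ContinuousLinearMap.proj 2,
        (c * 4) • ContinuousLinearMap.proj 1] with hDdef
  -- explicit derivative of E
  have hEd : ∀ p : Fin 3 → ℝ, HasFDerivAt E (D p) p := by
    intro p
    apply hasFDerivAt_pi''
    intro i
    have h0 : HasFDerivAt (fun p : Fin 3 → ℝ => p 0)
        (ContinuousLinearMap.proj 0 : (Fin 3 → ℝ) →L[ℝ] ℝ) p :=
      (ContinuousLinearMap.proj 0 : (Fin 3 → ℝ) →L[ℝ] ℝ).hasFDerivAt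
    have h1 : HasFDerivAt (fun p : Fin 3 → ℝ => p 1)
        (ContinuousLinearMap.proj 1 : (Fin 3 → ℝ) →L[ℝ] ℝ) p :=
      (ContinuousLinearMap.proj 1 : (Fin 3 → ℝ) →L[ℝ] ℝ).hasFDerivAt
    have h2' : HasFDerivAt (fun p : Fin 3 → ℝ => p 2)
        (ContinuousLinearMap.proj 2 : (Fin 3 → ℝ) →L[ℝ] ℝ) p :=
      (ContinuousLinearMap.proj 2 : (Fin 3 → ℝ) →L[ℝ] ℝ).hasFDerivAt
    fin_cases i
    · -- first component : constant
      exact (hasFDerivAt_const (c * 4) p).congr_fderiv (by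
        ext v
        simp [hDdef])
    · -- second component
      have hfc : HasFDerivAt (fun p : Fin 3 → ℝ => f (p 0))
          ((deriv f (p 0)) • (ContinuousLinearMap.proj 0 : (Fin 3 → ℝ) →L[ℝ] ℝ)) p :=
        HasDerivAt.comp_hasFDerivAt p ((hf.differentiable (by simp) (p 0)).hasDerivAt) h0
      have hec : HasFDerivAt (fun p : Fin 3 → ℝ => Real.exp (2 * p 2))
          (Real.exp (2 * p 2) • ((2:ℝ) •
            (ContinuousLinearMap.proj 2 : (Fin 3 → ℝ) →L[ℝ] ℝ))) p :=
        by have := HasDerivAt.comp_hasFDerivAt p (Real.hasDerivAt_exp (2 * p 2)) (h2'.const_mul 2); exact this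
      have k0 := ((((h1.mul h1).const_mul 2).sub
        ((((hfc.add (hec.const_mul α)).add (h1.const_mul β)).add_const γ).const_mul
          2)).add_const 1).const_mul c
      have key : HasFDerivAt (fun y : Fin 3 → ℝ => c * (2 * (y 1) ^ 2 -
          2 * (f (y 0) + α * Real.exp (2 * y 2) + β * y 1 + γ) + 1)) _ p :=
        k0.congr_of_eventuallyEq (Filter.Eventually.of_forall fun y => by simp only [Pi.mul_apply, Pi.add_apply, Pi.sub_apply]; ring)
      exact key.congr_fderiv (by
        ext v
        simp [hDdef, ContinuousLinearMap.add_apply, ContinuousLinearMap.smul_apply,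
          ContinuousLinearMap.sub_apply, ContinuousLinearMap.proj_apply, smul_eq_mul]
        ring)
    · -- third component
      have key := (h1.const_mul 4).const_mul c
      exact key.congr_fderiv (by
        ext v
        simp [hDdef, ContinuousLinearMap.smul_apply, ContinuousLinearMap.proj_apply,
          smul_eq_mul]
        ring)
  have hEfd : ∀ p, fderiv ℝ E p = D p := fun p => (hEd p).fderiv
  -- φE = const − E
  have hφE' : φE = fun p => (c • ![0, 2, 0] : Fin 3 → ℝ) - E p := by
    funext p
    funext i
    fin_cases i <;>
      simp [hφEdef, hEdef] <;> ring
  have hφEfd : ∀ p, fderiv ℝ φE p = -(D p) := by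
    intro p
    rw [hφE']
    have : HasFDerivAt (fun p : Fin 3 → ℝ => (c • ![0, 2, 0] : Fin 3 → ℝ) - E p)
        (0 - D p) p := (hasFDerivAt_const _ _).sub (hEd p)
    rw [this.fderiv]
    simp
  have hξfd : ∀ p : Fin 3 → ℝ,
      fderiv ℝ (fun _ : Fin 3 → ℝ => (![0, 0, 2] : Fin 3 → ℝ)) p = 0 :=
    fun p => fderiv_const_apply _
  have happ : ∀ p v : Fin 3 → ℝ, (D p) v = ![0,
      c * (-2 * deriv f (p 0)) * v 0 + c * (4 * p 1 - 2 * β) * v 1 +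
        c * (-4 * α * Real.exp (2 * p 2)) * v 2, c * 4 * v 1] := by
    intro p v
    funext i
    fin_cases i <;>
      simp [hDdef, ContinuousLinearMap.pi_apply, ContinuousLinearMap.proj_apply]
  refine ⟨?_, ?_, ?_⟩ <;> intro p <;> rw [hlie]
  · rw [hEfd, hξfd, happ]
    funext i
    fin_cases i <;>
      simp [hEdef, hφEdef] <;> ring
  · rw [hφEfd, hξfd, ContinuousLinearMap.neg_apply, happ]
    funext i
    fin_cases i <;>
      simp [hEdef, hφEdef] <;> ring
  · rw [hφEfd, hEfd, ContinuousLinearMap.neg_apply, happ, happ]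
    funext i
    fin_cases i
    · simp [hEdef, hφEdef]
    · have hcc : c * c = 1 / 2 := by rw [hc, ← mul_inv, h2]; norm_num
      have hsc : Real.sqrt 2 * c = 1 := by rw [hc]; exact mul_inv_cancel₀ hs0
      simp [hEdef, hφEdef]
      linear_combination (-(4 * p 1 - 2 * β)) * ((2:ℝ) * hcc - hsc)
    · have hcc : c * c = 1 / 2 := by rw [hc, ← mul_inv, h2]; norm_num
      simp [hEdef, hφEdef]
      linear_combination (-8 : ℝ) * hcc
end
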